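/- The Kim–Roush 7×7 matrices A and B (with A having rows [0,0,1,1,3,0,0],[1,0,0,0,3,0,0],[0,1,0,0,3,0,0],[0,0,1,0,3,0,0],[0,0,0,0,0,0,1],[1,1,1,1,10,0,0],[1,1,1,1,0,1,0] and B having rows [0,0,1,1,3,0,0],[1,0,0,0,0,0,0],[0,1,0,0,0,0,0],[0,0,1,0,0,0,0],[0,0,0,0,0,0,1],[4,5,6,3,10,0,0],[4,5,6,3,0,1,0]) both have Bowen–Franks group isomorphic to ℤ/99ℤ. -/

import Mathlib

/-!
An integer vector `c` with `cᵀ(1 - A) ≡ 0 (mod N)` gives a functional `ℤⁿ → ℤ/N` vanishing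
on the image of `1 - A`. Conversely, if `(1 - A) P = 1 - e cᵀ` and `(1 - A) w = N e`, every `v`
with `c ⬝ v = N k` is the image of `P v + k w`. So the image is exactly the kernel of the
functional, which is onto as soon as some `c j` is a unit mod `N`. For the Kim–Roush matrices
such certificates exist with `N = 99` and `e = e₆`, and they are checked by computation.
-/

/-- The Bowen–Franks group of an integer matrix `A`: the cokernel `ℤⁿ/(I − A)ℤⁿ`. -/
abbrev BowenFranks {n : ℕ} (A : Matrix (Fin n) (Fin n) ℤ) :=
  (Fin n → ℤ) ⧸ LinearMap.range (Matrix.toLin' ((1 : Matrix (Fin n) (Fin n) ℤ) - A))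

/-- The Kim–Roush matrix `A`. -/
def KRA : Matrix (Fin 7) (Fin 7) ℤ :=
  !![0, 0, 1, 1, 3, 0, 0;
     1, 0, 0, 0, 3, 0, 0;
     0, 1, 0, 0, 3, 0, 0;
     0, 0, 1, 0, 3, 0, 0;
     0, 0, 0, 0, 0, 0, 1;
     1, 1, 1, 1, 10, 0, 0;
     1, 1, 1, 1, 0, 1, 0]

/-- The Kim–Roush matrix `B`. -/
def KRB : Matrix (Fin 7) (Fin 7) ℤ :=
  !![0, 0, 1, 1, 3, 0, 0;
     1, 0, 0, 0, 0, 0, 0;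
     0, 1, 0, 0, 0, 0, 0;
     0, 0, 1, 0, 0, 0, 0;
     0, 0, 0, 0, 0, 0, 1;
     4, 5, 6, 3, 10, 0, 0;
     4, 5, 6, 3, 0, 1, 0]

open Matrix

section

variable {n : Type*} [Fintype n]

def dotProductMod (N : ℕ) (c : n → ℤ) : (n → ℤ) →ₗ[ℤ] ZMod N :=
  (Int.castAddHom (ZMod N)).toIntLinearMap ∘ₗ dotProductBilin ℤ ℤ c

@[simp]
lemma dotProductMod_apply (N : ℕ) (c v : n → ℤ) :
    dotProductMod N c v = ((c ⬝ᵥ v : ℤ) : ZMod N) := rfl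

lemma dotProductMod_eq_zero_iff {N : ℕ} {c v : n → ℤ} :
    dotProductMod N c v = 0 ↔ (N : ℤ) ∣ c ⬝ᵥ v := by
  rw [dotProductMod_apply, ZMod.intCast_zmod_eq_zero_iff_dvd]

variable [DecidableEq n]

lemma dotProductMod_surjective {N : ℕ} {c : n → ℤ} {j : n} (hu : IsUnit (c j : ZMod N)) :
    Function.Surjective (dotProductMod N c) := by
  intro z
  obtain ⟨m, hm⟩ := ZMod.intCast_surjective (((hu.unit⁻¹ : (ZMod N)ˣ) : ZMod N) * z)
  refine ⟨Pi.single j m, ?_⟩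
  rw [dotProductMod_apply, dotProduct_single, Int.cast_mul, hm, ← mul_assoc,
    IsUnit.mul_val_inv, one_mul]

lemma range_toLin'_eq_ker_dotProductMod {N : ℕ} {M P : Matrix n n ℤ} {c e w : n → ℤ}
    (hc : ∀ i, (N : ℤ) ∣ (c ᵥ* M) i) (hw : M *ᵥ w = (N : ℤ) • e)
    (hP : M * P = 1 - vecMulVec e c) :
    LinearMap.range (toLin' M) = LinearMap.ker (dotProductMod N c) := by
  ext v
  rw [LinearMap.mem_range, LinearMap.mem_ker, dotProductMod_eq_zero_iff]
  constructor
  · rintro ⟨x, rfl⟩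
    rw [toLin'_apply, dotProduct_mulVec]
    exact Finset.dvd_sum fun i _ => (hc i).mul_right (x i)
  · rintro ⟨k, hk⟩
    refine ⟨P *ᵥ v + k • w, ?_⟩
    rw [toLin'_apply, mulVec_add, mulVec_smul, hw, mulVec_mulVec, hP, sub_mulVec,
      one_mulVec, vecMulVec_mulVec, hk, op_smul_eq_smul]
    module

end

lemma nonempty_bowenFranks_addEquiv_zmod {m N : ℕ} {A P : Matrix (Fin m) (Fin m) ℤ}
    {c e w : Fin m → ℤ} {j : Fin m}
    (hc : ∀ i, (N : ℤ) ∣ (c ᵥ* (1 - A)) i) (hw : (1 - A) *ᵥ w = (N : ℤ) • e)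
    (hP : (1 - A) * P = 1 - vecMulVec e c) (hu : IsUnit (c j : ZMod N)) :
    Nonempty (BowenFranks A ≃+ ZMod N) :=
  ⟨((Submodule.quotEquivOfEq _ _ (range_toLin'_eq_ker_dotProductMod hc hw hP)).trans
    ((dotProductMod N c).quotKerEquivOfSurjective (dotProductMod_surjective hu))).toAddEquiv⟩

def KRA.functional : Fin 7 → ℤ := ![-8, -10, -12, -6, -98, 1, 1]

def KRA.preimageVec : Fin 7 → ℤ := ![-18, -15, -12, -9, 1, -44, 1]

def KRA.preimageMatrix : Matrix (Fin 7) (Fin 7) ℤ :=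
  !![-1, -2, -2, -1, -18, 0, 0;
     -1, -1, -2, -1, -15, 0, 0;
     -1, -1, -1, -1, -12, 0, 0;
     -1, -1, -1,  0,  -9, 0, 0;
      0,  0,  0,  0,   1, 0, 0;
     -4, -5, -6, -3, -44, 1, 0;
      0,  0,  0,  0,   0, 0, 0]

def KRB.functional : Fin 7 → ℤ := ![-36, -44, -54, -30, -98, 1, 1]

def KRB.preimageVec : Fin 7 → ℤ := ![-3, -3, -3, -3, 1, -44, 1]

def KRB.preimageMatrix : Matrix (Fin 7) (Fin 7) ℤ :=
  !![ -1,  -2,  -2,  -1,  -3, 0, 0;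
      -1,  -1,  -2,  -1,  -3, 0, 0;
      -1,  -1,  -1,  -1,  -3, 0, 0;
      -1,  -1,  -1,   0,  -3, 0, 0;
       0,   0,   0,   0,   1, 0, 0;
     -18, -22, -27, -15, -44, 1, 0;
       0,   0,   0,   0,   0, 0, 0]

/-- Both Kim–Roush matrices have Bowen–Franks group `ℤ/99ℤ`. -/
theorem kim_roush_bowenFranks :
    Nonempty (BowenFranks KRA ≃+ ZMod 99) ∧ Nonempty (BowenFranks KRB ≃+ ZMod 99) :=
  ⟨nonempty_bowenFranks_addEquiv_zmod (c := KRA.functional) (w := KRA.preimageVec)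
      (P := KRA.preimageMatrix) (e := Pi.single 6 1) (j := 6) (by decide) (by decide) (by decide)
      (by simp [KRA.functional]),
    nonempty_bowenFranks_addEquiv_zmod (c := KRB.functional) (w := KRB.preimageVec)
      (P := KRB.preimageMatrix) (e := Pi.single 6 1) (j := 6) (by decide) (by decide) (by decide)
      (by simp [KRB.functional])⟩
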